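/- arXiv:2111.13658 — 4 statements merged into one kernel-verified Lean document; each statement's English description precedes it below -/
import Mathlib

section
/- Let p be a prime, n ∈ ℕ, and let ι be a finite type with Fintype.card ι ≥ (p − 1)·n + 1. Then for every family v : ι → (Fin n → ZMod p), we have ∏_{i ∈ ι} (1 − g^{v i}) = 0 in the group ring F_p[F_p^n]. -/
/-!
The elements `x_j = 1 - g^{e_j}` generate the augmentation ideal `I` of `𝔽_p[𝔽_p^n]`, because
`1 - g^{a+b} = (1 - g^a) + g^a (1 - g^b)`. In characteristic `p` we have
`x_j^p = 1 - g^{p e_j} = 0`, so by pigeonhole every monomial of degree `(p - 1) n + 1` in the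
`x_j` vanishes, i.e. `I^{(p-1)n+1} = 0`. The product in question lies in `I^{|ι|}`.
-/

open AddMonoidAlgebra Finset

theorem Finset.prod_comp_eq_zero_of_pow_eq_zero {ι κ M₀ : Type*} [Fintype ι] [Fintype κ]
    [CommMonoidWithZero M₀] (x : κ → M₀) (j : ι → κ) {m : ℕ} (hx : ∀ k, x k ^ m = 0)
    (hcard : (m - 1) * Fintype.card κ < Fintype.card ι) :
    ∏ i, x (j i) = 0 := by
  classical
  obtain ⟨k, hk⟩ : ∃ k, m - 1 < #{i | j i = k} :=
    Fintype.exists_lt_card_fiber_of_mul_lt_card j (by rwa [mul_comm])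
  have hk_mem : k ∈ univ.image j := by
    obtain ⟨i, hi⟩ := Finset.card_pos.mp (Nat.zero_lt_of_lt hk)
    exact Finset.mem_image.mpr ⟨i, Finset.mem_univ i, (Finset.mem_filter.mp hi).2⟩
  rw [Finset.prod_comp]
  exact Finset.prod_eq_zero hk_mem (pow_eq_zero_of_le (by omega) (hx k))

theorem Ideal.span_range_pow_eq_bot {R κ : Type*} [CommSemiring R] [Fintype κ] (x : κ → R)
    {m : ℕ} (hx : ∀ k, x k ^ m = 0) :
    Ideal.span (Set.range x) ^ ((m - 1) * Fintype.card κ + 1) = ⊥ := by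
  rw [Ideal.span, Submodule.span_pow, eq_bot_iff, Submodule.span_le]
  intro a ha
  obtain ⟨f, rfl⟩ := Set.mem_pow.mp ha
  choose j hj using fun i => (f i).2
  rw [SetLike.mem_coe, Ideal.mem_bot, List.prod_ofFn]
  simp only [← hj]
  exact Finset.prod_comp_eq_zero_of_pow_eq_zero x j hx (by simp)

namespace AddMonoidAlgebra

variable {k G : Type*}

theorem charP [Semiring k] [AddZeroClass G] (p : ℕ) [CharP k p] : CharP k[G] p :=
  ⟨fun n => by rw [natCast_def, single_eq_zero, CharP.cast_eq_zero_iff k p]⟩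

theorem one_sub_single_pow_char [CommRing k] [AddCommMonoid G] (p : ℕ) [Fact p.Prime]
    [CharP k p] {g : G} (hg : p • g = 0) : ((1 : k[G]) - single g 1) ^ p = 0 := by
  have := charP (k := k) (G := G) p
  rw [sub_pow_char, one_pow, single_pow, hg, one_pow, ← one_def, sub_self]

theorem one_sub_single_mem_span_of_mem_closure [Ring k] [AddMonoid G] {S : Set G}
    {g : G} (hg : g ∈ AddSubmonoid.closure S) :
    (1 : k[G]) - single g 1 ∈ Ideal.span ((fun s => 1 - single s 1) '' S) := by
  induction hg using AddSubmonoid.closure_induction with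
  | mem s hs => exact Ideal.subset_span ⟨s, hs, rfl⟩
  | zero => simp [← one_def]
  | add a b _ _ ha hb =>
    have hsplit : (1 : k[G]) - single (a + b) 1 =
        (1 - single a 1) + single a 1 * (1 - single b 1) := by
      rw [mul_sub, mul_one, single_mul_single, mul_one]
      abel
    rw [hsplit]
    exact add_mem ha (Ideal.mul_mem_left _ _ hb)

end AddMonoidAlgebra

theorem ZMod.addSubmonoid_closure_range_piSingle_one (p : ℕ) [NeZero p] {ι : Type*}
    [Finite ι] [DecidableEq ι] :
    AddSubmonoid.closure (Set.range fun j : ι => Pi.single j (1 : ZMod p)) = ⊤ := by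
  rw [eq_top_iff]
  rintro v -
  induction v using Pi.single_induction with
  | zero => exact zero_mem _
  | add v w hv hw => exact add_mem hv hw
  | single j a =>
    rw [← ZMod.natCast_zmod_val a, ← nsmul_one, Pi.single_smul]
    exact AddSubmonoid.nsmul_mem _ (AddSubmonoid.subset_closure (Set.mem_range_self j)) _

theorem stmt_8 (p : ℕ) (hp : p.Prime) (n : ℕ) (ι : Type) [Fintype ι]
    (hι : (p - 1) * n + 1 ≤ Fintype.card ι) (v : ι → (Fin n → ZMod p)) :
    ∏ i : ι, ((1 : AddMonoidAlgebra (ZMod p) (Fin n → ZMod p)) -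
      AddMonoidAlgebra.single (v i) 1) = 0 := by
  have := Fact.mk hp
  let x (j : Fin n) : AddMonoidAlgebra (ZMod p) (Fin n → ZMod p) := 1 - single (Pi.single j 1) 1
  have hI : Ideal.span (Set.range x) ^ ((p - 1) * n + 1) = ⊥ := by
    have := Ideal.span_range_pow_eq_bot x fun j => one_sub_single_pow_char p
      (by rw [← Nat.cast_smul_eq_nsmul (ZMod p), ZMod.natCast_self, zero_smul])
    rwa [Fintype.card_fin] at this
  have hmem (i : ι) : 1 - single (v i) 1 ∈ Ideal.span (Set.range x) := by
    have hv : v i ∈ AddSubmonoid.closure (Set.range fun j : Fin n => Pi.single j 1) := by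
      rw [ZMod.addSubmonoid_closure_range_piSingle_one]
      exact AddSubmonoid.mem_top _
    have := one_sub_single_mem_span_of_mem_closure (k := ZMod p) hv
    rwa [← Set.range_comp] at this
  have hprod : ∏ i, (1 - single (v i) 1) ∈ Ideal.span (Set.range x) ^ Fintype.card ι := by
    rw [← Finset.card_univ, ← Finset.prod_const]
    exact Ideal.prod_mem_prod fun i _ => hmem i
  simpa [hI] using Ideal.pow_le_pow_right hι hprod
end

section
/- Let p be a prime, let r be an integer with 1 ≤ r ≤ p − 1, let ι be a finite type, and let v : ι → (Fin n → ZMod p) be an (r, F_p)-irredundant family. Then for every b : ι → ZMod p with b i ≠ 0 for all i, and every w ∈ ι, there exists ε : ι → ℤ such that 1 ≤ ε w ≤ r, |ε i| ≤ r for every i ≠ w, and ((ε w : ZMod p) · b w) • v w = Σ_{i ∈ ι, i ≠ w} ((ε i : ZMod p) · b i) • v i. -/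
/-- The family `v` is `(r, F_p)`-vanishing: `∏ i, (1 - g^{v i})^r = 0` in the
group ring `F_p[F_p^n]`. -/
def FpVanishing (p n r : ℕ) {ι : Type} [Fintype ι] (v : ι → (Fin n → ZMod p)) : Prop :=
  ∏ i : ι, ((1 : AddMonoidAlgebra (ZMod p) (Fin n → ZMod p)) -
    AddMonoidAlgebra.single (v i) 1) ^ r = 0

/-- The family `v` is `(r, F_p)`-irredundant: it is `(r, F_p)`-vanishing, but the
corresponding product over any proper subset of the index set is nonzero. -/
def FpIrredundant (p n r : ℕ) {ι : Type} [Fintype ι] (v : ι → (Fin n → ZMod p)) : Prop :=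
  FpVanishing p n r v ∧
    ∀ S : Finset ι, S ≠ Finset.univ →
      ∏ i ∈ S, ((1 : AddMonoidAlgebra (ZMod p) (Fin n → ZMod p)) -
        AddMonoidAlgebra.single (v i) 1) ^ r ≠ 0

/-!
Scaling `v i` by `b i ≠ 0` changes `1 - g^{v i}` only up to mutual divisibility, since
`1 - g^a ∣ 1 - g^{m • a}`; so with `a i = b i • v i` the product `Q` of the `(1 - g^{a i})^r`
over `i ≠ w` is nonzero while `(1 - g^{a w})^r * Q = 0`. Reading off the coefficient of this at a
point `x` of the support of `Q`, the term `Q x` must be cancelled, so `x - j • a w` is also in the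
support for some `1 ≤ j ≤ r`. Each support point of `Q` has the form `∑ m i • a i` with
`0 ≤ m i ≤ r`, and subtracting the two expressions gives the relation.
-/

namespace AddMonoidAlgebra

open Finset

variable {k G ι : Type*} [CommRing k]

section AddCommMonoid

variable [AddCommMonoid G]

theorem one_sub_single_pow (a : G) (r : ℕ) :
    (1 - single a 1 : k[G]) ^ r =
      ∑ j ∈ range (r + 1), single (j • a) ((-1) ^ j * (r.choose j : k)) := by
  rw [sub_eq_add_neg, add_comm, add_pow]
  refine sum_congr rfl fun j _ => ?_
  rw [← single_neg, single_pow, one_pow, mul_one, natCast_def, single_mul_single, add_zero]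

theorem exists_eq_nsmul_of_mem_support_one_sub_single_pow (a : G) (r : ℕ) {x : G}
    (hx : x ∈ ((1 - single a 1 : k[G]) ^ r).coeff.support) : ∃ j ≤ r, x = j • a := by
  classical
  rw [one_sub_single_pow, coeff_sum] at hx
  obtain ⟨j, hj, hx⟩ := mem_biUnion.1 (Finsupp.support_finsetSum hx)
  exact ⟨j, Nat.lt_succ_iff.1 (mem_range.1 hj), mem_singleton.1 (Finsupp.support_single_subset hx)⟩

theorem exists_eq_sum_nsmul_of_mem_support_prod (a : ι → G) (r : ℕ) (S : Finset ι) {x : G}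
    (hx : x ∈ (∏ i ∈ S, (1 - single (a i) 1 : k[G]) ^ r).coeff.support) :
    ∃ m : ι → ℕ, (∀ i, m i ≤ r) ∧ x = ∑ i ∈ S, m i • a i := by
  classical
  induction S using Finset.induction_on generalizing x with
  | empty =>
    rw [prod_empty, one_def] at hx
    obtain rfl := mem_singleton.1 (Finsupp.support_single_subset hx)
    exact ⟨0, fun _ => Nat.zero_le _, by simp⟩
  | @insert i S hi ih =>
    rw [prod_insert hi] at hx
    obtain ⟨y, hy, z, hz, rfl⟩ := mem_add.1 (support_coeff_mul_subset _ _ hx)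
    obtain ⟨j, hj, rfl⟩ := exists_eq_nsmul_of_mem_support_one_sub_single_pow (a i) r hy
    obtain ⟨m, hm, rfl⟩ := ih hz
    refine ⟨Function.update m i j, fun t => ?_, ?_⟩
    · rcases eq_or_ne t i with rfl | ht
      · simpa using hj
      · simpa [ht] using hm t
    · rw [sum_insert hi, Function.update_self]
      congr 1
      exact sum_congr rfl fun t ht => by rw [Function.update_of_ne (ne_of_mem_of_not_mem ht hi)]

theorem one_sub_single_dvd_one_sub_single_nsmul (a : G) (m : ℕ) :
    (1 - single a 1 : k[G]) ∣ 1 - single (m • a) 1 := by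
  simpa [single_pow] using one_sub_dvd_one_sub_pow (single a 1 : k[G]) m

theorem one_sub_single_dvd_one_sub_single_smul {p : ℕ} [NeZero p] [Module (ZMod p) G]
    (a : G) (c : ZMod p) : (1 - single a 1 : k[G]) ∣ 1 - single (c • a) 1 := by
  rw [← ZMod.natCast_zmod_val c, Nat.cast_smul_eq_nsmul]
  exact one_sub_single_dvd_one_sub_single_nsmul a c.val

theorem prod_one_sub_single_smul_pow_eq_zero_iff {p : ℕ} [Fact p.Prime] [Module (ZMod p) G]
    {b : ι → ZMod p} (hb : ∀ i, b i ≠ 0) (a : ι → G) (r : ℕ) (S : Finset ι) :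
    ∏ i ∈ S, (1 - single (b i • a i) 1 : k[G]) ^ r = 0 ↔
      ∏ i ∈ S, (1 - single (a i) 1 : k[G]) ^ r = 0 := by
  have hdvd {c : ι → ZMod p} {a' : ι → G} :
      ∏ i ∈ S, (1 - single (a' i) 1 : k[G]) ^ r ∣ ∏ i ∈ S, (1 - single (c i • a' i) 1) ^ r :=
    prod_dvd_prod_of_dvd _ _ fun i _ =>
      pow_dvd_pow_of_dvd (one_sub_single_dvd_one_sub_single_smul _ _) r
  refine ⟨fun h => zero_dvd_iff.1 ?_, fun h => zero_dvd_iff.1 (h ▸ hdvd)⟩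
  convert h ▸ hdvd (c := fun i => (b i)⁻¹) (a' := fun i => b i • a i) using 4
  rw [inv_smul_smul₀ (hb _)]

end AddCommMonoid

section AddCommGroup

variable [AddCommGroup G]

theorem exists_sub_nsmul_mem_support {a : G} {r : ℕ} {Q : k[G]}
    (hQ : (1 - single a 1) ^ r * Q = 0) {x : G} (hx : x ∈ Q.coeff.support) :
    ∃ j, 1 ≤ j ∧ j ≤ r ∧ x - j • a ∈ Q.coeff.support := by
  have hcoeff : ∑ j ∈ range (r + 1), (-1) ^ j * (r.choose j : k) * Q.coeff (x - j • a) = 0 := by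
    have := congrArg (fun f : k[G] => f.coeff x) hQ
    simpa [one_sub_single_pow, sum_mul, coeff_sum, neg_add_eq_sub] using this
  rw [sum_range_succ', pow_zero, Nat.choose_zero_right, zero_smul, sub_zero] at hcoeff
  obtain ⟨j, hj, hne⟩ : ∃ j ∈ range r,
      (-1) ^ (j + 1) * (r.choose (j + 1) : k) * Q.coeff (x - (j + 1) • a) ≠ 0 := by
    refine exists_ne_zero_of_sum_ne_zero fun hsum => Finsupp.mem_support_iff.1 hx ?_
    simpa [hsum] using hcoeff
  exact ⟨j + 1, j.succ_pos, mem_range.1 hj, Finsupp.mem_support_iff.2 (right_ne_zero_of_mul hne)⟩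

theorem exists_int_relation_of_prod_eq_zero [Fintype ι] [DecidableEq ι] (a : ι → G) {r : ℕ}
    (hvan : ∏ i, (1 - single (a i) 1 : k[G]) ^ r = 0) {w : ι}
    (hne : ∏ i ∈ univ.erase w, (1 - single (a i) 1 : k[G]) ^ r ≠ 0) :
    ∃ ε : ι → ℤ, 1 ≤ ε w ∧ ε w ≤ r ∧ (∀ i, i ≠ w → |ε i| ≤ r) ∧
      ε w • a w = ∑ i ∈ univ.erase w, ε i • a i := by
  set Q := ∏ i ∈ univ.erase w, (1 - single (a i) 1 : k[G]) ^ r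
  have hQ : (1 - single (a w) 1) ^ r * Q = 0 := by
    rwa [mul_prod_erase _ (fun i => (1 - single (a i) 1 : k[G]) ^ r) (mem_univ w)]
  obtain ⟨x, hx⟩ := Finsupp.support_nonempty_iff.2 fun h => hne (coeff_injective h)
  obtain ⟨j, hj1, hjr, hxj⟩ := exists_sub_nsmul_mem_support hQ hx
  obtain ⟨m, hm, hxm⟩ := exists_eq_sum_nsmul_of_mem_support_prod a r _ hx
  obtain ⟨m', hm', hxm'⟩ := exists_eq_sum_nsmul_of_mem_support_prod a r _ hxj
  refine ⟨Function.update (fun i => (m i : ℤ) - m' i) w j, ?_, ?_, fun i hi => ?_, ?_⟩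
  · simpa using hj1
  · simpa using hjr
  · have := hm i
    have := hm' i
    rw [Function.update_of_ne hi, abs_le]
    omega
  · calc (Function.update (fun i => (m i : ℤ) - m' i) w j w) • a w = x - (x - j • a w) := by simp
      _ = ∑ i ∈ univ.erase w, ((m i : ℤ) - m' i) • a i := by
        rw [hxm', hxm, ← sum_sub_distrib]
        simp [sub_smul]
      _ = _ := sum_congr rfl fun i hi => by rw [Function.update_of_ne (ne_of_mem_erase hi)]

end AddCommGroup

end AddMonoidAlgebra

theorem stmt_10_general (p : ℕ) (hp : p.Prime) (n : ℕ) (r : ℕ)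
    (ι : Type) [Fintype ι] [DecidableEq ι] (v : ι → (Fin n → ZMod p)) (hv : FpIrredundant p n r v)
    (b : ι → ZMod p) (hb : ∀ i, b i ≠ 0) (w : ι) :
    ∃ ε : ι → ℤ, 1 ≤ ε w ∧ ε w ≤ (r : ℤ) ∧ (∀ i, i ≠ w → |ε i| ≤ (r : ℤ)) ∧
      (((ε w : ℤ) : ZMod p) * b w) • v w =
        ∑ i ∈ Finset.univ.erase w, (((ε i : ℤ) : ZMod p) * b i) • v i := by
  have : Fact p.Prime := ⟨hp⟩
  obtain ⟨hvan, hirr⟩ := hv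
  obtain ⟨ε, hε1, hεr, hε, hrel⟩ :=
    AddMonoidAlgebra.exists_int_relation_of_prod_eq_zero (fun i => b i • v i)
    ((AddMonoidAlgebra.prod_one_sub_single_smul_pow_eq_zero_iff hb v r _).2 hvan)
    (w := w) (mt (AddMonoidAlgebra.prod_one_sub_single_smul_pow_eq_zero_iff hb v r _).1
      (hirr _ (Finset.erase_ssubset (Finset.mem_univ w)).ne))
  refine ⟨ε, hε1, hεr, hε, ?_⟩
  simpa only [mul_smul, Int.cast_smul_eq_zsmul] using hrel

theorem stmt_10 (p : ℕ) (hp : p.Prime) (n : ℕ) (r : ℕ) (hr1 : 1 ≤ r) (hrp : r ≤ p - 1)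
    (ι : Type) [Fintype ι] [DecidableEq ι] (v : ι → (Fin n → ZMod p)) (hv : FpIrredundant p n r v)
    (b : ι → ZMod p) (hb : ∀ i, b i ≠ 0) (w : ι) :
    ∃ ε : ι → ℤ, 1 ≤ ε w ∧ ε w ≤ (r : ℤ) ∧ (∀ i, i ≠ w → |ε i| ≤ (r : ℤ)) ∧
      (((ε w : ℤ) : ZMod p) * b w) • v w =
        ∑ i ∈ Finset.univ.erase w, (((ε i : ℤ) : ZMod p) * b i) • v i :=
  stmt_10_general p hp n r ι v hv b hb w
end

section
/- Let A be a finite additive abelian group admitting an efficient coset cover, that is, a finite family of additive subgroups H : Fin k → AddSubgroup A and elements x : Fin k → A such that (H i, x i)_{i ∈ Fin k} is an irredundant coset cover of A, ⨅_{i ∈ Fin k} H i = ⊥, and every H i is a maximal proper subgroup of A. Then there exist a prime p and an integer n ≥ 1 such that A is isomorphic as an additive group to Fin n → ZMod p. -/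
/-- The family of cosets `(x i + H i)` covers `A`. -/
def IsCosetCover {A : Type*} [AddCommGroup A] {k : ℕ}
    (H : Fin k → AddSubgroup A) (x : Fin k → A) : Prop :=
  ∀ a : A, ∃ i : Fin k, a - x i ∈ H i

/-- The family of cosets `(x i + H i)` is an irredundant cover of `A`:
it covers `A`, but no proper subfamily does. -/
def IsIrredundantCosetCover {A : Type*} [AddCommGroup A] {k : ℕ}
    (H : Fin k → AddSubgroup A) (x : Fin k → A) : Prop :=
  IsCosetCover H x ∧
    ∀ S : Finset (Fin k), S ≠ Finset.univ → ∃ a : A, ∀ i ∈ S, a - x i ∉ H i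

/-!
A maximal subgroup of a finite abelian group has prime index `q`, hence contains `q • A`.
If the cosets of an irredundant cover had two different indices, split them into those of
index `p` and the rest: irredundance gives an element avoiding each part, and since `p` is
coprime to the product of the other indices, the Chinese remainder theorem glues the two into
an element avoiding every coset. So all indices equal one prime `p`, `p • A ≤ ⨅ i, H i = ⊥`,
and `A` is a nonzero finite-dimensional vector space over `ZMod p`.
-/

lemma AddSubgroup.isSimpleAddGroup_quotient_of_isCoatom {A : Type*} [AddCommGroup A]
    {H : AddSubgroup A} (h : IsCoatom H) : IsSimpleAddGroup (A ⧸ H) := by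
  let e : AddSubgroup (A ⧸ H) ≃o Set.Ici H := QuotientAddGroup.comapMk'OrderIso H
  have : IsSimpleOrder (AddSubgroup (A ⧸ H)) :=
    e.isSimpleOrder_iff.2 (Set.isSimpleOrder_Ici_iff_isCoatom.2 h)
  have : Nontrivial (A ⧸ H) := AddSubgroup.nontrivial_iff.1 inferInstance
  exact ⟨fun K _ => IsSimpleOrder.eq_bot_or_eq_top K⟩

lemma AddSubgroup.index_prime_of_isCoatom {A : Type*} [AddCommGroup A] [Finite A]
    {H : AddSubgroup A} (h : IsCoatom H) : H.index.Prime :=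
  have := isSimpleAddGroup_quotient_of_isCoatom h
  IsSimpleAddGroup.prime_card

lemma AddSubgroup.nsmul_mem_of_index_dvd {A : Type*} [AddCommGroup A] (H : AddSubgroup A)
    {n : ℕ} (hn : H.index ∣ n) (y : A) : n • y ∈ H := by
  obtain ⟨d, rfl⟩ := hn
  rw [mul_nsmul]
  exact H.nsmul_mem (H.nsmul_index_mem y) d

lemma exists_sub_eq_nsmul_of_coprime {A : Type*} [AddCommGroup A] {m n : ℕ}
    (hmn : m.Coprime n) (a b : A) : ∃ c : A, (∃ u, c - a = m • u) ∧ ∃ v, c - b = n • v := by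
  obtain ⟨s, t, hst⟩ := hmn.isCoprime
  refine ⟨a + m • s • (b - a), ⟨s • (b - a), by abel⟩, t • (a - b), ?_⟩
  linear_combination (norm := module) hst • (b - a)

lemma Module.exists_linearEquiv_fin_pi (K V : Type*) [DivisionRing K] [AddCommGroup V]
    [Module K V] [Finite V] [Nontrivial V] : ∃ n, 0 < n ∧ Nonempty (V ≃ₗ[K] (Fin n → K)) :=
  have : Module.Finite K V := .of_finite
  ⟨_, Module.finrank_pos, ⟨(Module.finBasis K V).equivFun⟩⟩

lemma exists_addEquiv_fin_pi_zmod_of_nsmul_eq_zero {A : Type*} [AddCommGroup A] [Finite A]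
    [Nontrivial A] {p : ℕ} (hp : p.Prime) (h : ∀ y : A, p • y = 0) :
    ∃ n, 0 < n ∧ Nonempty (A ≃+ (Fin n → ZMod p)) := by
  have : Fact p.Prime := ⟨hp⟩
  let _ : Module (ZMod p) A := AddCommGroup.zmodModule h
  obtain ⟨n, hn, ⟨e⟩⟩ := Module.exists_linearEquiv_fin_pi (ZMod p) A
  exact ⟨n, hn, ⟨e.toAddEquiv⟩⟩

section CosetCover

variable {A : Type*} [AddCommGroup A] {k : ℕ} {H : Fin k → AddSubgroup A} {x : Fin k → A}

theorem IsCosetCover.covers_or_covers_compl (hcov : IsCosetCover H x) (S : Finset (Fin k)) {m n : ℕ}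
    (hmn : m.Coprime n) (hm : ∀ i ∈ S, ∀ y, m • y ∈ H i) (hn : ∀ i ∈ Sᶜ, ∀ y, n • y ∈ H i) :
    (∀ a, ∃ i ∈ S, a - x i ∈ H i) ∨ ∀ b, ∃ i ∈ Sᶜ, b - x i ∈ H i := by
  by_contra! ⟨⟨a, ha⟩, ⟨b, hb⟩⟩
  obtain ⟨c, ⟨u, hu⟩, ⟨v, hv⟩⟩ := exists_sub_eq_nsmul_of_coprime hmn a b
  obtain ⟨i, hi⟩ := hcov c
  by_cases hiS : i ∈ S
  · have := (H i).sub_mem hi (hm i hiS u)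
    rw [← hu, sub_sub_sub_cancel_left] at this
    exact ha i hiS this
  · rw [← Finset.mem_compl] at hiS
    have := (H i).sub_mem hi (hn i hiS v)
    rw [← hv, sub_sub_sub_cancel_left] at this
    exact hb i hiS this

theorem IsIrredundantCosetCover.eq_univ_of_covers (hcov : IsIrredundantCosetCover H x) {S : Finset (Fin k)}
    (hS : ∀ a, ∃ i ∈ S, a - x i ∈ H i) : S = Finset.univ := by
  by_contra hne
  obtain ⟨a, ha⟩ := hcov.2 S hne
  obtain ⟨i, hiS, hi⟩ := hS a
  exact ha i hiS hi

theorem IsIrredundantCosetCover.index_eq_of_prime (hcov : IsIrredundantCosetCover H x)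
    (hprime : ∀ i, (H i).index.Prime) (i j : Fin k) : (H i).index = (H j).index := by
  set S := Finset.univ.filter fun l => (H l).index = (H j).index
  have hcop : (H j).index.Coprime (∏ l ∈ Sᶜ, (H l).index) :=
    Nat.Coprime.prod_right fun l hl =>
      (Nat.coprime_primes (hprime j) (hprime l)).2 fun h => by simp [S, h] at hl
  rcases hcov.1.covers_or_covers_compl S hcop
      (fun l hl => (H l).nsmul_mem_of_index_dvd (Finset.mem_filter.1 hl).2.dvd)
      (fun l hl => (H l).nsmul_mem_of_index_dvd (Finset.dvd_prod_of_mem _ hl)) with hS | hSc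
  · have hi : i ∈ S := by simp [hcov.eq_univ_of_covers hS]
    exact (Finset.mem_filter.1 hi).2
  · have hj : j ∈ Sᶜ := by simp [hcov.eq_univ_of_covers hSc]
    simp [S] at hj

end CosetCover

theorem stmt_17 (A : Type) [AddCommGroup A] [Fintype A] (k : ℕ)
    (H : Fin k → AddSubgroup A) (x : Fin k → A)
    (hcov : IsIrredundantCosetCover H x)
    (hbot : (⨅ i : Fin k, H i) = ⊥)
    (hmax : ∀ i : Fin k, IsCoatom (H i)) :
    ∃ (p n : ℕ), p.Prime ∧ 1 ≤ n ∧ Nonempty (A ≃+ (Fin n → ZMod p)) := by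
  obtain ⟨j, -⟩ := hcov.1 0
  have hprime i := AddSubgroup.index_prime_of_isCoatom (hmax i)
  have hexp (y : A) : (H j).index • y = 0 := by
    have : (H j).index • y ∈ ⨅ i, H i := AddSubgroup.mem_iInf.2 fun i =>
      (H i).nsmul_mem_of_index_dvd (hcov.index_eq_of_prime hprime i j).dvd y
    rwa [hbot, AddSubgroup.mem_bot] at this
  have : Nontrivial A := AddSubgroup.nontrivial_iff.1 (nontrivial_of_ne _ _ (hmax j).1)
  obtain ⟨n, hn, e⟩ := exists_addEquiv_fin_pi_zmod_of_nsmul_eq_zero (hprime j) hexp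
  exact ⟨_, n, hprime j, hn, e⟩
end

section
/- Let A be a finite additive abelian group and let p be a prime dividing Nat.card A. If (H i, x i)_{i ∈ Fin k} is an irredundant coset cover of A with ⨅_{i ∈ Fin k} H i = ⊥, then k ≥ p. -/
/-!
By Cauchy, `A` contains a subgroup `K` of order `p`. Since the `H i` meet in `⊥`, some `H i` does
not contain `K`, so by irredundancy some point `a` lies outside every coset whose subgroup contains
`K`. The coset `a + K` therefore only meets cosets `x i + H i` with `K ⊄ H i`, i.e. with
`H i ⊓ K = ⊥` as `K` has prime order; each of them contains at most one point of `a + K`, so at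
least `p` cosets are needed to cover `a + K`.
-/

namespace AddSubgroup

variable {A : Type*} [AddGroup A]

theorem inf_eq_bot_of_card_prime_of_not_le {H K : AddSubgroup A} (hK : (Nat.card K).Prime)
    (hKH : ¬K ≤ H) : H ⊓ K = ⊥ := by
  have : Finite K := Nat.finite_of_card_ne_zero hK.ne_zero
  rcases hK.eq_one_or_self_of_dvd _ (card_dvd_of_le (inf_le_right : H ⊓ K ≤ K)) with h | h
  · exact card_eq_one.mp h
  · exact absurd ((eq_of_le_of_card_ge inf_le_right h.ge).ge.trans inf_le_left) hKH

end AddSubgroup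

theorem IsCosetCover.card_le_of_forall_inf_eq_bot {A : Type*} [AddCommGroup A] {k : ℕ}
    {H : Fin k → AddSubgroup A} {x : Fin k → A} (hcov : IsCosetCover H x) (K : AddSubgroup A) (a : A)
    (hK : ∀ c ∈ K, ∀ i, a + c - x i ∈ H i → H i ⊓ K = ⊥) : Nat.card K ≤ k := by
  choose i hi using fun c : K => hcov (a + c)
  have hinj : Function.Injective i := by
    intro c d hcd
    have hdiff : (c : A) - d ∈ H (i c) ⊓ K := by
      refine ⟨?_, K.sub_mem c.2 d.2⟩
      have := (H (i c)).sub_mem (hi c) (hcd ▸ hi d)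
      rwa [sub_sub_sub_cancel_right, add_sub_add_left_eq_sub] at this
    rw [hK c c.2 (i c) (hi c), AddSubgroup.mem_bot, sub_eq_zero] at hdiff
    exact Subtype.ext hdiff
  simpa using Nat.card_le_card_of_injective i hinj

theorem stmt_19 (A : Type) [AddCommGroup A] [Fintype A] (p : ℕ) (hp : p.Prime)
    (hdvd : p ∣ Nat.card A) (k : ℕ) (H : Fin k → AddSubgroup A) (x : Fin k → A)
    (hcov : IsIrredundantCosetCover H x)
    (hbot : (⨅ i : Fin k, H i) = ⊥) : p ≤ k := by
  classical
  have : Fact p.Prime := ⟨hp⟩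
  obtain ⟨g, hg⟩ := exists_prime_addOrderOf_dvd_card' p hdvd
  set K := AddSubgroup.zmultiples g
  have hK : Nat.card K = p := (Nat.card_zmultiples g).trans hg
  have hnot_all : Finset.univ.filter (fun i => K ≤ H i) ≠ Finset.univ := by
    intro hnot_all
    have hKbot : K ≤ ⨅ i, H i :=
      le_iInf fun i => Finset.filter_eq_self.mp hnot_all i (Finset.mem_univ i)
    rw [hbot, le_bot_iff] at hKbot
    rw [hKbot, AddSubgroup.card_bot] at hK
    exact hp.ne_one hK.symm
  obtain ⟨a, ha⟩ := hcov.2 _ hnot_all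
  rw [← hK]
  refine hcov.1.card_le_of_forall_inf_eq_bot K a fun c hc i hci =>
    AddSubgroup.inf_eq_bot_of_card_prime_of_not_le (hK ▸ hp) fun hKH => ?_
  refine ha i (Finset.mem_filter.mpr ⟨Finset.mem_univ i, hKH⟩) ?_
  simpa [add_sub_right_comm] using (H i).sub_mem hci (hKH hc)
end
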